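/- Let K(a_{n,k}) and K(b_{n,k}) be Köthe spaces and θ a sequence with θ_0 ≠ 0. If the upper triangular Toeplitz operator Ť_θ : K(a_{n,k}) → K(b_{n,k}), defined by Ť_θ e_n = Σ_{j=1}^{n} θ_{n-j} e_j, is continuous, then θ belongs to the dual of K(a_{n,k}) (i.e. there exist m and C with |θ_{n-1}| ≤ C a_{n,m} for all n), and for every k ∈ ℕ there exist m ∈ ℕ and C > 0 with b_{n,k} ≤ C a_{n,m} for all n. -/
import Mathlib


open scoped BigOperators
noncomputable section

/-- A Köthe matrix: non-negative entries, each row eventually positive,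
rows non-decreasing in the second index. -/
structure IsKotheMatrix (a : ℕ → ℕ → ℝ) : Prop where
  nonneg : ∀ n k, 0 ≤ a n k
  pos : ∀ n, ∃ k, 0 < a n k
  mono : ∀ n k, a n k ≤ a n (k + 1)

/-- Membership in the Köthe space `K(a)`. -/
def InKothe (a : ℕ → ℕ → ℝ) (x : ℕ → ℝ) : Prop :=
  ∀ k, Summable fun n => |x n| * a n k

/-- The `k`-th seminorm of the Köthe space `K(a)`. -/
def kNorm (a : ℕ → ℕ → ℝ) (k : ℕ) (x : ℕ → ℝ) : ℝ :=
  ∑' n, |x n| * a n k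

/-- Grothendieck–Pietsch nuclearity criterion for a Köthe space. -/
def IsNuclearKothe (a : ℕ → ℕ → ℝ) : Prop :=
  ∀ k, ∃ l, k < l ∧ Summable fun n => a n k / a n l

/-- The `n`-th unit vector. -/
def unitVec (n : ℕ) : ℕ → ℝ := fun j => if j = n then 1 else 0

/-- Weight of the finite type power series space `Λ₁(β)`. -/
def finW (β : ℕ → ℝ) (k : ℕ) (n : ℕ) : ℝ := Real.exp (-(β n) / (k : ℝ))

/-- Weight of the infinite type power series space `Λ_∞(β)`. -/
def infW (β : ℕ → ℝ) (k : ℕ) (n : ℕ) : ℝ := Real.exp ((k : ℝ) * β n)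

/-- The `k`-th seminorm of `Λ₁(β)` (for `0 < k`). -/
def finNorm (β : ℕ → ℝ) (k : ℕ) (x : ℕ → ℝ) : ℝ := ∑' n, |x n| * finW β k n

/-- The `k`-th seminorm of `Λ_∞(β)`. -/
def infNorm (β : ℕ → ℝ) (k : ℕ) (x : ℕ → ℝ) : ℝ := ∑' n, |x n| * infW β k n

/-- Membership in `Λ₁(β)`. -/
def memFin (β : ℕ → ℝ) (x : ℕ → ℝ) : Prop :=
  ∀ k : ℕ, 0 < k → Summable fun n => |x n| * finW β k n

/-- Membership in `Λ_∞(β)`. -/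
def memInf (β : ℕ → ℝ) (x : ℕ → ℝ) : Prop :=
  ∀ k : ℕ, 0 < k → Summable fun n => |x n| * infW β k n

/-- Lower triangular Toeplitz operator `T̂_θ`, `T̂_θ e_n = ∑_{j ≥ n} θ_{j-n} e_j`. -/
def hatT (θ : ℕ → ℝ) (x : ℕ → ℝ) : ℕ → ℝ :=
  fun j => ∑ i ∈ Finset.range (j + 1), θ (j - i) * x i

/-- Upper triangular Toeplitz operator `Ť_θ`, `Ť_θ e_n = ∑_{j ≤ n} θ_{n-j} e_j`. -/
def checkT (θ : ℕ → ℝ) (x : ℕ → ℝ) : ℕ → ℝ :=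
  fun j => ∑' i, θ i * x (j + i)

/-- Operator defined by a matrix acting on sequences. -/
def matOp (t : ℕ → ℕ → ℝ) (x : ℕ → ℝ) : ℕ → ℝ :=
  fun j => ∑' n, t j n * x n

/-- The growth condition (3.5): `β_s ≤ M (β_{s-t} + β_t)` for all `s > t`. -/
def GrowthCond (β : ℕ → ℝ) (M : ℕ) : Prop :=
  ∀ t s : ℕ, t < s → β s ≤ (M : ℝ) * (β (s - t) + β t)

lemma checkT_unitVec (θ : ℕ → ℝ) (n j : ℕ) :
    checkT θ (unitVec n) j = if j ≤ n then θ (n - j) else 0 := by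
  unfold checkT unitVec
  split_ifs with h
  · rw [tsum_eq_single (n - j)]
    · have : j + (n - j) = n := by omega
      simp [this]
    · intro i hi
      have : j + i ≠ n := by omega
      simp [this]
  · have h0 : ∀ i, θ i * (if j + i = n then (1:ℝ) else 0) = 0 := by
      intro i
      have : j + i ≠ n := by omega
      simp [this]
    simp only [h0, tsum_zero]

lemma inKothe_unitVec (a : ℕ → ℕ → ℝ) (n : ℕ) : InKothe a (unitVec n) := by
  intro k
  apply summable_of_ne_finset_zero (s := {n})
  intro j hj
  simp only [Finset.mem_singleton] at hj
  simp [unitVec, hj]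

lemma kNorm_unitVec (a : ℕ → ℕ → ℝ) (m n : ℕ) :
    kNorm a m (unitVec n) = a n m := by
  unfold kNorm unitVec
  rw [tsum_eq_single n]
  · simp
  · intro i hi
    simp [hi]

lemma summ_aux (θ : ℕ → ℝ) (b : ℕ → ℕ → ℝ) (n k : ℕ) :
    Summable fun j => |checkT θ (unitVec n) j| * b j k := by
  apply summable_of_ne_finset_zero (s := Finset.range (n + 1))
  intro j hj
  simp only [Finset.mem_range, not_lt] at hj
  rw [checkT_unitVec]
  have : ¬ j ≤ n := by omega
  simp [this]

/-- If the upper triangular Toeplitz operator `Ť_θ : K(a) → K(b)` is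
continuous, then `θ` belongs to the dual of `K(a)` and `b` is dominated by `a`. -/
theorem stmt11 (a b : ℕ → ℕ → ℝ) (ha : IsKotheMatrix a) (hb : IsKotheMatrix b)
    (θ : ℕ → ℝ) (hθ : θ 0 ≠ 0)
    (hT : (∀ x, InKothe a x → InKothe b (checkT θ x)) ∧
      ∀ k, ∃ m, ∃ C > 0, ∀ x, InKothe a x →
        kNorm b k (checkT θ x) ≤ C * kNorm a m x) :
    (∃ m, ∃ C > 0, ∀ n, |θ n| ≤ C * a n m) ∧
    ∀ k, ∃ m, ∃ C > 0, ∀ n, b n k ≤ C * a n m := by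
  obtain ⟨-, hT2⟩ := hT
  constructor
  · obtain ⟨k0, hk0⟩ := hb.pos 0
    obtain ⟨m, C, hC, hbound⟩ := hT2 k0
    refine ⟨m, C / b 0 k0, div_pos hC hk0, fun n => ?_⟩
    have h1 := hbound (unitVec n) (inKothe_unitVec a n)
    rw [kNorm_unitVec] at h1
    have h2 : |θ n| * b 0 k0 ≤ kNorm b k0 (checkT θ (unitVec n)) := by
      have hs := summ_aux θ b n k0
      have hle := Summable.le_tsum hs 0 (fun j _ => mul_nonneg (abs_nonneg _) (hb.nonneg j k0))
      calc |θ n| * b 0 k0 = |checkT θ (unitVec n) 0| * b 0 k0 := by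
            rw [checkT_unitVec]; simp
        _ ≤ _ := hle
    rw [div_mul_eq_mul_div, le_div_iff₀ hk0]
    calc |θ n| * b 0 k0 ≤ kNorm b k0 (checkT θ (unitVec n)) := h2
      _ ≤ C * a n m := h1
  · intro k
    obtain ⟨m, C, hC, hbound⟩ := hT2 k
    refine ⟨m, C / |θ 0|, div_pos hC (abs_pos.2 hθ), fun n => ?_⟩
    have h1 := hbound (unitVec n) (inKothe_unitVec a n)
    rw [kNorm_unitVec] at h1
    have h2 : |θ 0| * b n k ≤ kNorm b k (checkT θ (unitVec n)) := by
      have hs := summ_aux θ b n k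
      have hle := Summable.le_tsum hs n (fun j _ => mul_nonneg (abs_nonneg _) (hb.nonneg j k))
      calc |θ 0| * b n k = |checkT θ (unitVec n) n| * b n k := by
            rw [checkT_unitVec]; simp
        _ ≤ _ := hle
    rw [div_mul_eq_mul_div, le_div_iff₀ (abs_pos.2 hθ)]
    calc b n k * |θ 0| = |θ 0| * b n k := mul_comm _ _
      _ ≤ _ := h2
      _ ≤ C * a n m := h1
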